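/- arXiv:1907.05360 — 2 statements merged into one kernel-verified Lean document; each statement's English description precedes it below -/
import Mathlib

section
/- (Ehrling's inequality) Let X, Y, X̃ be Banach spaces with X reflexive and X ↪ X̃ a continuous injection, and let T : X → Y be a compact linear operator. Then for every ε > 0 there exists C_ε > 0 such that ‖Tx‖_Y ≤ ε‖x‖_X + C_ε‖x‖_{X̃} for all x ∈ X. -/
/-!
By homogeneity it suffices that `‖ι u‖ → 0` forces `T u → 0` for `u` on the unit sphere. Along
an ultrafilter on the sphere, reflexivity and Banach–Alaoglu give a weak limit `x`, and
compactness of `T` a norm limit `y` of `T u`. Continuous linear maps are weakly continuous, so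
`ι x = 0` and `T x = y`; injectivity of `ι` gives `x = 0`, hence `y = 0`.
-/

open Filter Metric NormedSpace Topology

section

variable {𝕜 X Y Z : Type*} [RCLike 𝕜] [NormedAddCommGroup X] [NormedSpace 𝕜 X]
  [NormedAddCommGroup Y] [NormedSpace 𝕜 Y] [NormedAddCommGroup Z] [NormedSpace 𝕜 Z]

theorem isCompact_closure_toWeakSpace_image_of_isBounded
    (hrefl : Function.Surjective (inclusionInDoubleDual 𝕜 X)) {s : Set X}
    (hs : Bornology.IsBounded s) : IsCompact (closure (toWeakSpace 𝕜 X '' s)) := by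
  refine isCompact_closure_of_isBounded 𝕜 X _ ?_ fun φ _ => ?_
  · rwa [Set.preimage_image_eq _ (toWeakSpace 𝕜 X).injective]
  · obtain ⟨x, hx⟩ := hrefl (WeakDual.toStrongDual φ)
    exact ⟨toWeakSpace 𝕜 X x, hx⟩

theorem ContinuousLinearMap.apply_eq_of_tendsto_toWeakSpace {l : Filter X} [l.NeBot]
    (f : X →L[𝕜] Y) {x : X} {y : Y}
    (hx : Tendsto (toWeakSpace 𝕜 X) l (𝓝 (toWeakSpace 𝕜 X x))) (hy : Tendsto f l (𝓝 y)) :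
    f x = y := by
  have hweak : Tendsto (fun a => toWeakSpace 𝕜 Y (f a)) l (𝓝 (toWeakSpace 𝕜 Y (f x))) :=
    ((WeakSpace.map f).continuous.tendsto _).comp hx
  have hnorm : Tendsto (fun a => toWeakSpace 𝕜 Y (f a)) l (𝓝 (toWeakSpace 𝕜 Y y)) :=
    ((toWeakSpaceCLM 𝕜 Y).continuous.tendsto y).comp hy
  exact (toWeakSpace 𝕜 Y).injective (tendsto_nhds_unique hweak hnorm)

theorem IsCompactOperator.tendsto_comap_nhds_zero_inf_principal
    (hrefl : Function.Surjective (inclusionInDoubleDual 𝕜 X)) {ι : X →L[𝕜] Z}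
    (hι : Function.Injective ι) {T : X →L[𝕜] Y} (hT : IsCompactOperator T) {s : Set X}
    (hs : Bornology.IsBounded s) : Tendsto T (comap ι (𝓝 0) ⊓ 𝓟 s) (𝓝 0) := by
  rw [tendsto_iff_ultrafilter]
  intro U hU
  have hUs : s ∈ U := le_principal_iff.mp (hU.trans inf_le_right)
  obtain ⟨K, hK, hTK⟩ := hT.image_subset_compact_of_bounded hs
  obtain ⟨x₀, -, hx₀⟩ := (isCompact_closure_toWeakSpace_image_of_isBounded hrefl hs)
    |>.ultrafilter_le_nhds (U.map (toWeakSpace 𝕜 X))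
      (le_principal_iff.mpr (mem_of_superset (image_mem_map hUs) subset_closure))
  obtain ⟨y, -, hy⟩ := hK.ultrafilter_le_nhds (U.map T)
    (le_principal_iff.mpr (mem_of_superset (image_mem_map hUs) hTK))
  obtain ⟨x, rfl⟩ := (toWeakSpace 𝕜 X).surjective x₀
  have hιx : ι x = 0 :=
    ι.apply_eq_of_tendsto_toWeakSpace hx₀ (tendsto_comap.mono_left (hU.trans inf_le_left))
  have hTx : T x = y := T.apply_eq_of_tendsto_toWeakSpace hx₀ hy
  rwa [← hTx, hι (hιx.trans ι.map_zero.symm), map_zero] at hy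

theorem ContinuousLinearMap.norm_apply_smul_inv_norm (f : X →L[𝕜] Y) (x : X) :
    ‖f ((‖x‖⁻¹ : 𝕜) • x)‖ = ‖f x‖ / ‖x‖ := by
  rw [map_smul, norm_smul, norm_inv, RCLike.norm_ofReal, abs_norm, inv_mul_eq_div]

theorem ContinuousLinearMap.norm_apply_le_of_forall_norm_eq_one {ι : X →L[𝕜] Z}
    {T : X →L[𝕜] Y} {ε δ : ℝ} (hε : 0 ≤ ε) (hδ : 0 < δ)
    (h : ∀ u : X, ‖ι u‖ < δ → ‖u‖ = 1 → ‖T u‖ ≤ ε) (x : X) :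
    ‖T x‖ ≤ ε * ‖x‖ + ‖T‖ / δ * ‖ι x‖ := by
  rcases eq_or_ne x 0 with rfl | hx
  · simp
  have hx_pos : 0 < ‖x‖ := norm_pos_iff.mpr hx
  by_cases hιu : ‖ι ((‖x‖⁻¹ : 𝕜) • x)‖ < δ
  · have hTu := h _ hιu (norm_smul_inv_norm hx)
    rw [norm_apply_smul_inv_norm, div_le_iff₀ hx_pos] at hTu
    have : 0 ≤ ‖T‖ / δ * ‖ι x‖ := by positivity
    linarith
  · rw [not_lt, norm_apply_smul_inv_norm, le_div_iff₀ hx_pos] at hιu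
    calc ‖T x‖ ≤ ‖T‖ * ‖x‖ := T.le_opNorm x
      _ ≤ ‖T‖ / δ * ‖ι x‖ := by
        rw [div_mul_eq_mul_div, le_div_iff₀ hδ, mul_assoc]
        gcongr
        linarith
      _ ≤ ε * ‖x‖ + ‖T‖ / δ * ‖ι x‖ := le_add_of_nonneg_left (by positivity)

end

theorem stmt_1_general {𝕜 X Y Xt : Type*} [RCLike 𝕜]
    [NormedAddCommGroup X] [NormedSpace 𝕜 X]
    [NormedAddCommGroup Y] [NormedSpace 𝕜 Y]
    [NormedAddCommGroup Xt] [NormedSpace 𝕜 Xt]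
    (hrefl : Function.Surjective (NormedSpace.inclusionInDoubleDual 𝕜 X))
    (ι : X →L[𝕜] Xt) (hι : Function.Injective ι)
    (T : X →L[𝕜] Y) (hT : IsCompactOperator T) :
    ∀ ε > (0 : ℝ), ∃ C > (0 : ℝ), ∀ x : X, ‖T x‖ ≤ ε * ‖x‖ + C * ‖ι x‖ := by
  intro ε hε
  obtain ⟨δ, hδ, hsmall⟩ : ∃ δ > 0, ∀ u : X, ‖ι u‖ < δ → ‖u‖ = 1 → ‖T u‖ ≤ ε := by
    have hT_small := (hT.tendsto_comap_nhds_zero_inf_principal hrefl hι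
      (isBounded_sphere (x := (0 : X)) (r := 1))).eventually (closedBall_mem_nhds (0 : Y) hε)
    rw [eventually_inf_principal, (nhds_basis_ball.comap ι).eventually_iff] at hT_small
    simpa only [Set.mem_preimage, mem_ball_zero_iff, mem_sphere_zero_iff_norm,
      dist_zero_right] using hT_small
  refine ⟨‖T‖ / δ + 1, by positivity, fun x => ?_⟩
  calc ‖T x‖ ≤ ε * ‖x‖ + ‖T‖ / δ * ‖ι x‖ :=
      ContinuousLinearMap.norm_apply_le_of_forall_norm_eq_one hε.le hδ hsmall x
    _ ≤ ε * ‖x‖ + (‖T‖ / δ + 1) * ‖ι x‖ := by gcongr; linarith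

/-- Ehrling's inequality: `X` reflexive Banach, `ι : X ↪ X̃` a continuous injection,
`T : X → Y` compact.  Then for every `ε > 0` there is `C_ε > 0` with
`‖Tx‖ ≤ ε‖x‖_X + C_ε‖x‖_X̃` for all `x`. -/
theorem stmt_1 {𝕜 X Y Xt : Type*} [RCLike 𝕜]
    [NormedAddCommGroup X] [NormedSpace 𝕜 X] [CompleteSpace X]
    [NormedAddCommGroup Y] [NormedSpace 𝕜 Y] [CompleteSpace Y]
    [NormedAddCommGroup Xt] [NormedSpace 𝕜 Xt] [CompleteSpace Xt]
    (hrefl : Function.Surjective (NormedSpace.inclusionInDoubleDual 𝕜 X))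
    (ι : X →L[𝕜] Xt) (hι : Function.Injective ι)
    (T : X →L[𝕜] Y) (hT : IsCompactOperator T) :
    ∀ ε > (0 : ℝ), ∃ C > (0 : ℝ), ∀ x : X, ‖T x‖ ≤ ε * ‖x‖ + C * ‖ι x‖ :=
  stmt_1_general hrefl ι hι T hT
end

section
/- (Norm equivalence of complexification norms) Let X be a real normed vector space and let ‖·‖_B be any complexification norm on X ⊗_ℝ ℂ, i.e. ‖x + i·0‖_B = ‖x‖_X and ‖x + iy‖_B = ‖x − iy‖_B for all x, y ∈ X. Then for the Taylor norm ‖x + iy‖_T := sup_{θ∈[0,2π]} ‖x cos θ − y sin θ‖_X one has ‖z‖_T ≤ ‖z‖_B ≤ 2‖z‖_T for all z ∈ X ⊗_ℝ ℂ. -/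
/-!
Multiplying by the unimodular scalar `e^{iθ}` does not change `N`, and it turns
`‖x cos θ - y sin θ‖` into the norm of the real part of a vector of the same `N`-norm.
Since `(a, 0)` is the average of `(a, b)` and its conjugate `(a, -b)`, real parts are
`N`-contracted, which gives `‖·‖_T ≤ N`. Conversely `N (x, y) ≤ N (x, 0) + N (0, y) = ‖x‖ + ‖y‖`,
and both `‖x‖` and `‖y‖` are values of the supremum defining `‖(x, y)‖_T` (at `θ = 0, -π/2`).
-/

/-- The complex scalar multiplication on the complexification `X × X` of a real vector space:
`c • (x, y) = (Re c • x - Im c • y, Im c • x + Re c • y)`. -/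
def cSMul {X : Type*} [AddCommGroup X] [Module ℝ X] (c : ℂ) (z : X × X) : X × X :=
  (c.re • z.1 - c.im • z.2, c.im • z.1 + c.re • z.2)

/-- The minimal (Taylor) complexification norm
`‖x + iy‖_T = sup_θ ‖x cos θ - y sin θ‖`. -/
noncomputable def taylorNorm {X : Type*} [NormedAddCommGroup X] [NormedSpace ℝ X]
    (z : X × X) : ℝ :=
  ⨆ θ : ℝ, ‖Real.cos θ • z.1 - Real.sin θ • z.2‖

open Real

section Taylor

variable {X : Type*} [NormedAddCommGroup X] [NormedSpace ℝ X]

lemma norm_cos_smul_sub_sin_smul_le (θ : ℝ) (x y : X) :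
    ‖cos θ • x - sin θ • y‖ ≤ ‖x‖ + ‖y‖ :=
  calc ‖cos θ • x - sin θ • y‖ ≤ |cos θ| * ‖x‖ + |sin θ| * ‖y‖ := by
        simpa only [norm_smul, Real.norm_eq_abs] using norm_sub_le (cos θ • x) (sin θ • y)
    _ ≤ 1 * ‖x‖ + 1 * ‖y‖ := by gcongr <;> [exact abs_cos_le_one θ; exact abs_sin_le_one θ]
    _ = ‖x‖ + ‖y‖ := by ring

lemma bddAbove_range_norm_cos_smul_sub_sin_smul (x y : X) :
    BddAbove (Set.range fun θ : ℝ => ‖cos θ • x - sin θ • y‖) :=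
  ⟨‖x‖ + ‖y‖, by rintro _ ⟨θ, rfl⟩; exact norm_cos_smul_sub_sin_smul_le θ x y⟩

lemma norm_cos_smul_sub_sin_smul_le_taylorNorm (θ : ℝ) (x y : X) :
    ‖cos θ • x - sin θ • y‖ ≤ taylorNorm (x, y) :=
  le_ciSup (bddAbove_range_norm_cos_smul_sub_sin_smul x y) θ

lemma norm_fst_le_taylorNorm (x y : X) : ‖x‖ ≤ taylorNorm (x, y) := by
  simpa using norm_cos_smul_sub_sin_smul_le_taylorNorm 0 x y

lemma norm_snd_le_taylorNorm (x y : X) : ‖y‖ ≤ taylorNorm (x, y) := by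
  simpa using norm_cos_smul_sub_sin_smul_le_taylorNorm (-(π / 2)) x y

end Taylor

section cSMul

variable {X : Type*} [AddCommGroup X] [Module ℝ X]

lemma cSMul_I_mk_zero (y : X) : cSMul Complex.I (y, 0) = (0, y) := by
  simp [cSMul]

lemma cSMul_exp_mul_I (θ : ℝ) (x y : X) :
    cSMul (Complex.exp (θ * Complex.I)) (x, y) = (cos θ • x - sin θ • y, sin θ • x + cos θ • y) := by
  simp [cSMul, Complex.exp_ofReal_mul_I_re, Complex.exp_ofReal_mul_I_im]

lemma cSMul_half_add_conj (a b : X) :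
    cSMul (1 / 2) ((a, b) + (a, -b)) = (a, 0) := by
  simp only [cSMul, Prod.mk_add_mk, add_neg_cancel]
  ext <;> simp; module

end cSMul

section ComplexificationNorm

variable {X : Type*} [NormedAddCommGroup X] [NormedSpace ℝ X] {N : X × X → ℝ}

lemma norm_fst_le_of_conj_invariant
    (Ntri : ∀ z w : X × X, N (z + w) ≤ N z + N w)
    (Nsmul : ∀ (c : ℂ) (z : X × X), N (cSMul c z) = ‖c‖ * N z)
    (Nreal : ∀ x : X, N (x, 0) = ‖x‖) (Nconj : ∀ x y : X, N (x, y) = N (x, -y)) (a b : X) :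
    ‖a‖ ≤ N (a, b) := by
  have hhalf : ‖a‖ = 1 / 2 * N ((a, b) + (a, -b)) := by
    rw [← Nreal, ← cSMul_half_add_conj a b, Nsmul]
    norm_num
  have := Ntri (a, b) (a, -b)
  rw [← Nconj] at this
  linarith

lemma apply_rotation_eq (Nsmul : ∀ (c : ℂ) (z : X × X), N (cSMul c z) = ‖c‖ * N z)
    (θ : ℝ) (x y : X) :
    N (cos θ • x - sin θ • y, sin θ • x + cos θ • y) = N (x, y) := by
  rw [← cSMul_exp_mul_I, Nsmul, Complex.norm_exp_ofReal_mul_I, one_mul]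

lemma apply_mk_le_norm_add_norm (Ntri : ∀ z w : X × X, N (z + w) ≤ N z + N w)
    (Nsmul : ∀ (c : ℂ) (z : X × X), N (cSMul c z) = ‖c‖ * N z)
    (Nreal : ∀ x : X, N (x, 0) = ‖x‖) (x y : X) :
    N (x, y) ≤ ‖x‖ + ‖y‖ := by
  have Nim : N (0, y) = ‖y‖ := by
    rw [← cSMul_I_mk_zero, Nsmul, Complex.norm_I, one_mul, Nreal]
  calc N (x, y) = N ((x, 0) + (0, y)) := by simp
    _ ≤ N (x, 0) + N (0, y) := Ntri _ _
    _ = ‖x‖ + ‖y‖ := by rw [Nreal, Nim]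

end ComplexificationNorm

/-- Equivalence of complexification norms: any complexification norm `N` on `X ⊗_ℝ ℂ ≃ X × X`
(a norm which is conjugation-invariant, complex-homogeneous and restricts to `‖·‖_X` on `X`)
satisfies `‖z‖_T ≤ N z ≤ 2‖z‖_T`, where `‖·‖_T` is the Taylor norm. -/
theorem stmt_10 {X : Type*} [NormedAddCommGroup X] [NormedSpace ℝ X]
    (N : X × X → ℝ)
    (Ntri : ∀ z w : X × X, N (z + w) ≤ N z + N w)
    (Nsmul : ∀ (c : ℂ) (z : X × X), N (cSMul c z) = ‖c‖ * N z)
    (Nreal : ∀ x : X, N (x, 0) = ‖x‖)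
    (Nconj : ∀ x y : X, N (x, y) = N (x, -y)) :
    ∀ z : X × X, taylorNorm z ≤ N z ∧ N z ≤ 2 * taylorNorm z := by
  rintro ⟨x, y⟩
  constructor
  · refine ciSup_le fun θ => ?_
    calc ‖cos θ • x - sin θ • y‖
        ≤ N (cos θ • x - sin θ • y, sin θ • x + cos θ • y) :=
          norm_fst_le_of_conj_invariant Ntri Nsmul Nreal Nconj _ _
      _ = N (x, y) := apply_rotation_eq Nsmul θ x y
  · linarith [apply_mk_le_norm_add_norm Ntri Nsmul Nreal x y,
      norm_fst_le_taylorNorm x y, norm_snd_le_taylorNorm x y]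
end
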